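/- arXiv:1408.4537 — 3 statements merged into one kernel-verified Lean document; each statement's English description precedes it below -/
import Mathlib

section
/- For octonions a, b, c, one has tr(a*b*c) = tr(b*c*a), i.e. the trilinear form tr((a*b)*c) is invariant under cyclic permutation of its arguments. -/
open Matrix

noncomputable section

abbrev O := Fin 8 → ℝ

def e (i : Fin 8) : O := fun k => if k = i then 1 else 0

/-- Multiplication table: `tbl i j = (s, k)` means `e i * e j = s • e k`. -/
def tbl : Fin 8 → Fin 8 → ℤ × Fin 8 :=
  ![![(1,0),(1,1),(1,2),(1,3),(1,4),(1,5),(1,6),(1,7)],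
    ![(1,1),(-1,0),(1,4),(1,7),(-1,2),(1,6),(-1,5),(-1,3)],
    ![(1,2),(-1,4),(-1,0),(1,5),(1,1),(-1,3),(1,7),(-1,6)],
    ![(1,3),(-1,7),(-1,5),(-1,0),(1,6),(1,2),(-1,4),(1,1)],
    ![(1,4),(1,2),(-1,1),(-1,6),(-1,0),(1,7),(1,3),(-1,5)],
    ![(1,5),(-1,6),(1,3),(-1,2),(-1,7),(-1,0),(1,1),(1,4)],
    ![(1,6),(1,5),(-1,7),(1,4),(-1,3),(-1,1),(-1,0),(1,2)],
    ![(1,7),(1,3),(1,6),(-1,1),(1,5),(-1,4),(-1,2),(-1,0)]]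

/-- The octonion product. -/
def omul (x y : O) : O :=
  fun k => ∑ i : Fin 8, ∑ j : Fin 8,
    x i * y j * (if k = (tbl i j).2 then ((tbl i j).1 : ℝ) else 0)

/-- Octonion conjugation. -/
def oconj (x : O) : O := fun k => if k = 0 then x 0 else -x k

/-- The trace `tr x = x + conj x = 2 x₀`. -/
def otr (x : O) : ℝ := 2 * x 0

/-- The norm `N x = x₀² + ⋯ + x₇²`. -/
def oN (x : O) : ℝ := ∑ i : Fin 8, (x i) ^ 2

/-- The basis of the integral octaves. -/
def f : Fin 8 → O :=
  ![e 0, e 1, e 2, e 3,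
    ![0, 1/2, 1/2, 1/2, -1/2, 0, 0, 0],
    ![-1/2, -1/2, 0, 0, -1/2, 1/2, 0, 0],
    ![-1/2, 1/2, -1/2, 0, 0, 0, 1/2, 0],
    ![-1/2, 0, 1/2, 0, 1/2, 0, 0, 1/2]]

/-- An octave is integral if it is a ℤ-linear combination of `f 0, …, f 7`. -/
def IsIntegralOctave (x : O) : Prop := ∃ c : Fin 8 → ℤ, x = ∑ i : Fin 8, (c i : ℝ) • f i

/-- The matrix `P a = (tr(conj(eᵢ) * a * eₖ)/2)`. -/
def P (a : O) : Matrix (Fin 8) (Fin 8) ℝ :=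
  Matrix.of fun i k => otr (omul (omul (oconj (e i)) a) (e k)) / 2

/-- The matrix `Q a = (tr(conj(fᵢ) * a * fⱼ))`. -/
def Q (a : O) : Matrix (Fin 8) (Fin 8) ℝ :=
  Matrix.of fun i j => otr (omul (omul (oconj (f i)) a) (f j))

/-- The matrix whose rows are the coordinates of `f 0, …, f 7`. -/
def F : Matrix (Fin 8) (Fin 8) ℝ := Matrix.of fun i j => f i j

end

noncomputable section

section

lemma s3 : (2:Fin 7).succ = 3 := rfl
lemma s4 : (2:Fin 6).succ.succ = 4 := rfl
lemma s5 : (2:Fin 5).succ.succ.succ = 5 := rfl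
lemma s6 : (2:Fin 4).succ.succ.succ.succ = 6 := rfl
lemma s7 : (2:Fin 3).succ.succ.succ.succ.succ = 7 := rfl

lemma oc0 (x y : O) : omul x y 0 = x 0 * y 0 - x 1 * y 1 - x 2 * y 2 - x 3 * y 3 - x 4 * y 4 - x 5 * y 5 - x 6 * y 6 - x 7 * y 7 := by
  simp [omul, tbl, Fin.sum_univ_succ, s3, s4, s5, s6, s7]
  ring

lemma oc1 (x y : O) : omul x y 1 = x 0 * y 1 + x 1 * y 0 + x 2 * y 4 + x 3 * y 7 - x 4 * y 2 + x 5 * y 6 - x 6 * y 5 - x 7 * y 3 := by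
  simp [omul, tbl, Fin.sum_univ_succ, s3, s4, s5, s6, s7]
  ring

lemma oc2 (x y : O) : omul x y 2 = x 0 * y 2 - x 1 * y 4 + x 2 * y 0 + x 3 * y 5 + x 4 * y 1 - x 5 * y 3 + x 6 * y 7 - x 7 * y 6 := by
  simp [omul, tbl, Fin.sum_univ_succ, s3, s4, s5, s6, s7]
  ring

lemma oc3 (x y : O) : omul x y 3 = x 0 * y 3 - x 1 * y 7 - x 2 * y 5 + x 3 * y 0 + x 4 * y 6 + x 5 * y 2 - x 6 * y 4 + x 7 * y 1 := by
  simp [omul, tbl, Fin.sum_univ_succ, s3, s4, s5, s6, s7]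
  ring

lemma oc4 (x y : O) : omul x y 4 = x 0 * y 4 + x 1 * y 2 - x 2 * y 1 - x 3 * y 6 + x 4 * y 0 + x 5 * y 7 + x 6 * y 3 - x 7 * y 5 := by
  simp [omul, tbl, Fin.sum_univ_succ, s3, s4, s5, s6, s7]
  ring

lemma oc5 (x y : O) : omul x y 5 = x 0 * y 5 - x 1 * y 6 + x 2 * y 3 - x 3 * y 2 - x 4 * y 7 + x 5 * y 0 + x 6 * y 1 + x 7 * y 4 := by
  simp [omul, tbl, Fin.sum_univ_succ, s3, s4, s5, s6, s7]
  ring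

lemma oc6 (x y : O) : omul x y 6 = x 0 * y 6 + x 1 * y 5 - x 2 * y 7 + x 3 * y 4 - x 4 * y 3 - x 5 * y 1 + x 6 * y 0 + x 7 * y 2 := by
  simp [omul, tbl, Fin.sum_univ_succ, s3, s4, s5, s6, s7]
  ring

lemma oc7 (x y : O) : omul x y 7 = x 0 * y 7 + x 1 * y 3 + x 2 * y 6 - x 3 * y 1 + x 4 * y 5 - x 5 * y 4 - x 6 * y 2 + x 7 * y 0 := by
  simp [omul, tbl, Fin.sum_univ_succ, s3, s4, s5, s6, s7]
  ring

end

theorem octonion_trace_cyclic (a b c : O) :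
    otr (omul (omul a b) c) = otr (omul (omul b c) a) := by
  rw [otr, otr, oc0, oc0]
  simp only [oc0, oc1, oc2, oc3, oc4, oc5, oc6, oc7]
  ring

end
end

section
/- The lattice of integral octaves 𝕆(ℤ) equipped with the norm form N satisfies N(x) ∈ ℤ for all integral octaves x, and the associated bilinear form (x,y) = tr(conj(x)*y) takes integer values, so that (𝕆(ℤ), N) is an even lattice (the bilinear form (x,x) = 2N(x) is even). -/
open Matrix

noncomputable section


namespace OctaveAux

lemma key (x y : O) : otr (omul (oconj x) y) = 2 * ∑ i : Fin 8, x i * y i := by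
  simp [otr, omul, oconj, tbl, Fin.sum_univ_succ, Fin.ext_iff, - Fin.val_eq_zero_iff]

lemma key2 (x : O) : oN x = ∑ i : Fin 8, x i * x i := by
  simp [oN, sq]

lemma sum_apply_f (c : Fin 8 → ℤ) (k : Fin 8) :
    (∑ i : Fin 8, (c i : ℝ) • f i) k = ∑ i : Fin 8, (c i : ℝ) * f i k := by
  simp

set_option maxHeartbeats 1000000 in
lemma norm_int (c : Fin 8 → ℤ) :
    oN (∑ i : Fin 8, (c i : ℝ) • f i) =
      ((c 0^2 + c 1^2 + c 2^2 + c 3^2 + c 4^2 + c 5^2 + c 6^2 + c 7^2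
        + c 1*c 4 + c 2*c 4 + c 3*c 4 - c 0*c 5 - c 1*c 5 - c 0*c 6 + c 1*c 6
        - c 2*c 6 - c 0*c 7 + c 2*c 7 : ℤ) : ℝ) := by
  rw [key2]
  simp only [sum_apply_f]
  simp [f, e, Fin.sum_univ_succ, Matrix.cons_val_zero, Matrix.cons_val_succ, show Fin.succ (0 : Fin 1) = 1 from rfl, show Fin.succ (0 : Fin 2) = 1 from rfl, show Fin.succ (1 : Fin 2) = 2 from rfl, show Fin.succ (0 : Fin 3) = 1 from rfl, show Fin.succ (1 : Fin 3) = 2 from rfl, show Fin.succ (2 : Fin 3) = 3 from rfl, show Fin.succ (0 : Fin 4) = 1 from rfl, show Fin.succ (1 : Fin 4) = 2 from rfl, show Fin.succ (2 : Fin 4) = 3 from rfl, show Fin.succ (3 : Fin 4) = 4 from rfl, show Fin.succ (0 : Fin 5) = 1 from rfl, show Fin.succ (1 : Fin 5) = 2 from rfl, show Fin.succ (2 : Fin 5) = 3 from rfl, show Fin.succ (3 : Fin 5) = 4 from rfl, show Fin.succ (4 : Fin 5) = 5 from rfl, show Fin.succ (0 : Fin 6) = 1 from rfl, show Fin.succ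 (1 : Fin 6) = 2 from rfl, show Fin.succ (2 : Fin 6) = 3 from rfl, show Fin.succ (3 : Fin 6) = 4 from rfl, show Fin.succ (4 : Fin 6) = 5 from rfl, show Fin.succ (5 : Fin 6) = 6 from rfl, show Fin.succ (0 : Fin 7) = 1 from rfl, show Fin.succ (1 : Fin 7) = 2 from rfl, show Fin.succ (2 : Fin 7) = 3 from rfl, show Fin.succ (3 : Fin 7) = 4 from rfl, show Fin.succ (4 : Fin 7) = 5 from rfl, show Fin.succ (5 : Fin 7) = 6 from rfl, show Fin.succ (6 : Fin 7) = 7 from rfl]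
  ring

set_option maxHeartbeats 1000000 in
lemma bilin_int (c d : Fin 8 → ℤ) :
    otr (omul (oconj (∑ i : Fin 8, (c i : ℝ) • f i)) (∑ i : Fin 8, (d i : ℝ) • f i)) =
      ((2*(c 0*d 0 + c 1*d 1 + c 2*d 2 + c 3*d 3 + c 4*d 4 + c 5*d 5 + c 6*d 6 + c 7*d 7)
        + (c 1*d 4 + c 4*d 1) + (c 2*d 4 + c 4*d 2) + (c 3*d 4 + c 4*d 3)
        - (c 0*d 5 + c 5*d 0) - (c 1*d 5 + c 5*d 1)
        - (c 0*d 6 + c 6*d 0) + (c 1*d 6 + c 6*d 1) - (c 2*d 6 + c 6*d 2)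
        - (c 0*d 7 + c 7*d 0) + (c 2*d 7 + c 7*d 2) : ℤ) : ℝ) := by
  rw [key]
  simp only [sum_apply_f]
  simp [f, e, Fin.sum_univ_succ, Matrix.cons_val_zero, Matrix.cons_val_succ, show Fin.succ (0 : Fin 1) = 1 from rfl, show Fin.succ (0 : Fin 2) = 1 from rfl, show Fin.succ (1 : Fin 2) = 2 from rfl, show Fin.succ (0 : Fin 3) = 1 from rfl, show Fin.succ (1 : Fin 3) = 2 from rfl, show Fin.succ (2 : Fin 3) = 3 from rfl, show Fin.succ (0 : Fin 4) = 1 from rfl, show Fin.succ (1 : Fin 4) = 2 from rfl, show Fin.succ (2 : Fin 4) = 3 from rfl, show Fin.succ (3 : Fin 4) = 4 from rfl, show Fin.succ (0 : Fin 5) = 1 from rfl, show Fin.succ (1 : Fin 5) = 2 from rfl, show Fin.succ (2 : Fin 5) = 3 from rfl, show Fin.succ (3 : Fin 5) = 4 from rfl, show Fin.succ (4 : Fin 5) = 5 from rfl, show Fin.succ (0 : Fin 6) = 1 from rfl, show Fin.succ (1 : Fin 6) = 2 from rfl, show Fin.succ (2 : Fin 6) = 3 from rfl, show Fin.succ (3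 : Fin 6) = 4 from rfl, show Fin.succ (4 : Fin 6) = 5 from rfl, show Fin.succ (5 : Fin 6) = 6 from rfl, show Fin.succ (0 : Fin 7) = 1 from rfl, show Fin.succ (1 : Fin 7) = 2 from rfl, show Fin.succ (2 : Fin 7) = 3 from rfl, show Fin.succ (3 : Fin 7) = 4 from rfl, show Fin.succ (4 : Fin 7) = 5 from rfl, show Fin.succ (5 : Fin 7) = 6 from rfl, show Fin.succ (6 : Fin 7) = 7 from rfl]
  push_cast
  ring

end OctaveAux

theorem integral_octaves_even_lattice :
    (∀ x : O, IsIntegralOctave x → ∃ n : ℤ, oN x = n) ∧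
    (∀ x y : O, IsIntegralOctave x → IsIntegralOctave y → ∃ m : ℤ, otr (omul (oconj x) y) = m) ∧
    (∀ x : O, otr (omul (oconj x) x) = 2 * oN x) := by
  refine ⟨?_, ?_, ?_⟩
  · rintro x ⟨c, rfl⟩
    exact ⟨_, OctaveAux.norm_int c⟩
  · rintro x y ⟨c, rfl⟩ ⟨d, rfl⟩
    exact ⟨_, OctaveAux.bilin_int c d⟩
  · intro x
    rw [OctaveAux.key, OctaveAux.key2]


end
end

section
/- The map a ↦ P(a), where P(a) = (tr(conj(e_i)*a*e_k)/2)_{i,k}, is ℝ-linear in a, and for every octonion a one has P(a)·P(a)^T = N(a)·Id (equivalently, the matrices P(e_1),...,P(e_7) generate a representation of the Clifford algebra of the negative definite form -N on ℝ^8 restricted to the even part). -/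
open Matrix

noncomputable section


noncomputable section
lemma tbl_0_0 : tbl 0 0 = (1,0) := rfl
lemma tbl_0_1 : tbl 0 1 = (1,1) := rfl
lemma tbl_0_2 : tbl 0 2 = (1,2) := rfl
lemma tbl_0_3 : tbl 0 3 = (1,3) := rfl
lemma tbl_0_4 : tbl 0 4 = (1,4) := rfl
lemma tbl_0_5 : tbl 0 5 = (1,5) := rfl
lemma tbl_0_6 : tbl 0 6 = (1,6) := rfl
lemma tbl_0_7 : tbl 0 7 = (1,7) := rfl
lemma tbl_1_0 : tbl 1 0 = (1,1) := rfl
lemma tbl_1_1 : tbl 1 1 = (-1,0) := rfl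
lemma tbl_1_2 : tbl 1 2 = (1,4) := rfl
lemma tbl_1_3 : tbl 1 3 = (1,7) := rfl
lemma tbl_1_4 : tbl 1 4 = (-1,2) := rfl
lemma tbl_1_5 : tbl 1 5 = (1,6) := rfl
lemma tbl_1_6 : tbl 1 6 = (-1,5) := rfl
lemma tbl_1_7 : tbl 1 7 = (-1,3) := rfl
lemma tbl_2_0 : tbl 2 0 = (1,2) := rfl
lemma tbl_2_1 : tbl 2 1 = (-1,4) := rfl
lemma tbl_2_2 : tbl 2 2 = (-1,0) := rfl
lemma tbl_2_3 : tbl 2 3 = (1,5) := rfl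
lemma tbl_2_4 : tbl 2 4 = (1,1) := rfl
lemma tbl_2_5 : tbl 2 5 = (-1,3) := rfl
lemma tbl_2_6 : tbl 2 6 = (1,7) := rfl
lemma tbl_2_7 : tbl 2 7 = (-1,6) := rfl
lemma tbl_3_0 : tbl 3 0 = (1,3) := rfl
lemma tbl_3_1 : tbl 3 1 = (-1,7) := rfl
lemma tbl_3_2 : tbl 3 2 = (-1,5) := rfl
lemma tbl_3_3 : tbl 3 3 = (-1,0) := rfl
lemma tbl_3_4 : tbl 3 4 = (1,6) := rfl
lemma tbl_3_5 : tbl 3 5 = (1,2) := rfl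
lemma tbl_3_6 : tbl 3 6 = (-1,4) := rfl
lemma tbl_3_7 : tbl 3 7 = (1,1) := rfl
lemma tbl_4_0 : tbl 4 0 = (1,4) := rfl
lemma tbl_4_1 : tbl 4 1 = (1,2) := rfl
lemma tbl_4_2 : tbl 4 2 = (-1,1) := rfl
lemma tbl_4_3 : tbl 4 3 = (-1,6) := rfl
lemma tbl_4_4 : tbl 4 4 = (-1,0) := rfl
lemma tbl_4_5 : tbl 4 5 = (1,7) := rfl
lemma tbl_4_6 : tbl 4 6 = (1,3) := rfl
lemma tbl_4_7 : tbl 4 7 = (-1,5) := rfl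
lemma tbl_5_0 : tbl 5 0 = (1,5) := rfl
lemma tbl_5_1 : tbl 5 1 = (-1,6) := rfl
lemma tbl_5_2 : tbl 5 2 = (1,3) := rfl
lemma tbl_5_3 : tbl 5 3 = (-1,2) := rfl
lemma tbl_5_4 : tbl 5 4 = (-1,7) := rfl
lemma tbl_5_5 : tbl 5 5 = (-1,0) := rfl
lemma tbl_5_6 : tbl 5 6 = (1,1) := rfl
lemma tbl_5_7 : tbl 5 7 = (1,4) := rfl
lemma tbl_6_0 : tbl 6 0 = (1,6) := rfl
lemma tbl_6_1 : tbl 6 1 = (1,5) := rfl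
lemma tbl_6_2 : tbl 6 2 = (-1,7) := rfl
lemma tbl_6_3 : tbl 6 3 = (1,4) := rfl
lemma tbl_6_4 : tbl 6 4 = (-1,3) := rfl
lemma tbl_6_5 : tbl 6 5 = (-1,1) := rfl
lemma tbl_6_6 : tbl 6 6 = (-1,0) := rfl
lemma tbl_6_7 : tbl 6 7 = (1,2) := rfl
lemma tbl_7_0 : tbl 7 0 = (1,7) := rfl
lemma tbl_7_1 : tbl 7 1 = (1,3) := rfl
lemma tbl_7_2 : tbl 7 2 = (1,6) := rfl
lemma tbl_7_3 : tbl 7 3 = (-1,1) := rfl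
lemma tbl_7_4 : tbl 7 4 = (1,5) := rfl
lemma tbl_7_5 : tbl 7 5 = (-1,4) := rfl
lemma tbl_7_6 : tbl 7 6 = (-1,2) := rfl
lemma tbl_7_7 : tbl 7 7 = (-1,0) := rfl

attribute [local simp] tbl_0_0 tbl_0_1 tbl_0_2 tbl_0_3 tbl_0_4 tbl_0_5 tbl_0_6 tbl_0_7 tbl_1_0 tbl_1_1 tbl_1_2 tbl_1_3 tbl_1_4 tbl_1_5 tbl_1_6 tbl_1_7 tbl_2_0 tbl_2_1 tbl_2_2 tbl_2_3 tbl_2_4 tbl_2_5 tbl_2_6 tbl_2_7 tbl_3_0 tbl_3_1 tbl_3_2 tbl_3_3 tbl_3_4 tbl_3_5 tbl_3_6 tbl_3_7 tbl_4_0 tbl_4_1 tbl_4_2 tbl_4_3 tbl_4_4 tbl_4_5 tbl_4_6 tbl_4_7 tbl_5_0 tbl_5_1 tbl_5_2 tbl_5_3 tbl_5_4 tbl_5_5 tbl_5_6 tbl_5_7 tbl_6_0 tbl_6_1 tbl_6_2 tbl_6_3 tbl_6_4 tbl_6_5 tbl_6_6 tbl_6_7 tbl_7_0 tbl_7_1 tbl_7_2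 tbl_7_3 tbl_7_4 tbl_7_5 tbl_7_6 tbl_7_7


lemma omul_e_right_zero (x : O) (k : Fin 8) :
    omul x (e k) 0 = if k = 0 then x 0 else -(x k) := by
  fin_cases k <;> simp [omul, e, Fin.sum_univ_eight]

@[local simp] lemma P_0_0 (a : O) : P a 0 0 = a 0 := by
  simp only [P, otr, Matrix.of_apply]
  rw [omul_e_right_zero]
  simp [omul, oconj, e, Fin.sum_univ_eight]
  try ring
@[local simp] lemma P_0_1 (a : O) : P a 0 1 = -a 1 := by
  simp only [P, otr, Matrix.of_apply]
  rw [omul_e_right_zero]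
  simp [omul, oconj, e, Fin.sum_univ_eight]
  try ring
@[local simp] lemma P_0_2 (a : O) : P a 0 2 = -a 2 := by
  simp only [P, otr, Matrix.of_apply]
  rw [omul_e_right_zero]
  simp [omul, oconj, e, Fin.sum_univ_eight]
  try ring
@[local simp] lemma P_0_3 (a : O) : P a 0 3 = -a 3 := by
  simp only [P, otr, Matrix.of_apply]
  rw [omul_e_right_zero]
  simp [omul, oconj, e, Fin.sum_univ_eight]
  try ring
@[local simp] lemma P_0_4 (a : O) : P a 0 4 = -a 4 := by
  simp only [P, otr, Matrix.of_apply]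
  rw [omul_e_right_zero]
  simp [omul, oconj, e, Fin.sum_univ_eight]
  try ring
@[local simp] lemma P_0_5 (a : O) : P a 0 5 = -a 5 := by
  simp only [P, otr, Matrix.of_apply]
  rw [omul_e_right_zero]
  simp [omul, oconj, e, Fin.sum_univ_eight]
  try ring
@[local simp] lemma P_0_6 (a : O) : P a 0 6 = -a 6 := by
  simp only [P, otr, Matrix.of_apply]
  rw [omul_e_right_zero]
  simp [omul, oconj, e, Fin.sum_univ_eight]
  try ring
@[local simp] lemma P_0_7 (a : O) : P a 0 7 = -a 7 := by
  simp only [P, otr, Matrix.of_apply]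
  rw [omul_e_right_zero]
  simp [omul, oconj, e, Fin.sum_univ_eight]
  try ring
@[local simp] lemma P_1_0 (a : O) : P a 1 0 = a 1 := by
  simp only [P, otr, Matrix.of_apply]
  rw [omul_e_right_zero]
  simp [omul, oconj, e, Fin.sum_univ_eight]
  try ring
@[local simp] lemma P_1_1 (a : O) : P a 1 1 = a 0 := by
  simp only [P, otr, Matrix.of_apply]
  rw [omul_e_right_zero]
  simp [omul, oconj, e, Fin.sum_univ_eight]
  try ring
@[local simp] lemma P_1_2 (a : O) : P a 1 2 = -a 4 := by
  simp only [P, otr, Matrix.of_apply]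
  rw [omul_e_right_zero]
  simp [omul, oconj, e, Fin.sum_univ_eight]
  try ring
@[local simp] lemma P_1_3 (a : O) : P a 1 3 = -a 7 := by
  simp only [P, otr, Matrix.of_apply]
  rw [omul_e_right_zero]
  simp [omul, oconj, e, Fin.sum_univ_eight]
  try ring
@[local simp] lemma P_1_4 (a : O) : P a 1 4 = a 2 := by
  simp only [P, otr, Matrix.of_apply]
  rw [omul_e_right_zero]
  simp [omul, oconj, e, Fin.sum_univ_eight]
  try ring
@[local simp] lemma P_1_5 (a : O) : P a 1 5 = -a 6 := by
  simp only [P, otr, Matrix.of_apply]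
  rw [omul_e_right_zero]
  simp [omul, oconj, e, Fin.sum_univ_eight]
  try ring
@[local simp] lemma P_1_6 (a : O) : P a 1 6 = a 5 := by
  simp only [P, otr, Matrix.of_apply]
  rw [omul_e_right_zero]
  simp [omul, oconj, e, Fin.sum_univ_eight]
  try ring
@[local simp] lemma P_1_7 (a : O) : P a 1 7 = a 3 := by
  simp only [P, otr, Matrix.of_apply]
  rw [omul_e_right_zero]
  simp [omul, oconj, e, Fin.sum_univ_eight]
  try ring
@[local simp] lemma P_2_0 (a : O) : P a 2 0 = a 2 := by
  simp only [P, otr, Matrix.of_apply]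
  rw [omul_e_right_zero]
  simp [omul, oconj, e, Fin.sum_univ_eight]
  try ring
@[local simp] lemma P_2_1 (a : O) : P a 2 1 = a 4 := by
  simp only [P, otr, Matrix.of_apply]
  rw [omul_e_right_zero]
  simp [omul, oconj, e, Fin.sum_univ_eight]
  try ring
@[local simp] lemma P_2_2 (a : O) : P a 2 2 = a 0 := by
  simp only [P, otr, Matrix.of_apply]
  rw [omul_e_right_zero]
  simp [omul, oconj, e, Fin.sum_univ_eight]
  try ring
@[local simp] lemma P_2_3 (a : O) : P a 2 3 = -a 5 := by
  simp only [P, otr, Matrix.of_apply]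
  rw [omul_e_right_zero]
  simp [omul, oconj, e, Fin.sum_univ_eight]
  try ring
@[local simp] lemma P_2_4 (a : O) : P a 2 4 = -a 1 := by
  simp only [P, otr, Matrix.of_apply]
  rw [omul_e_right_zero]
  simp [omul, oconj, e, Fin.sum_univ_eight]
  try ring
@[local simp] lemma P_2_5 (a : O) : P a 2 5 = a 3 := by
  simp only [P, otr, Matrix.of_apply]
  rw [omul_e_right_zero]
  simp [omul, oconj, e, Fin.sum_univ_eight]
  try ring
@[local simp] lemma P_2_6 (a : O) : P a 2 6 = -a 7 := by
  simp only [P, otr, Matrix.of_apply]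
  rw [omul_e_right_zero]
  simp [omul, oconj, e, Fin.sum_univ_eight]
  try ring
@[local simp] lemma P_2_7 (a : O) : P a 2 7 = a 6 := by
  simp only [P, otr, Matrix.of_apply]
  rw [omul_e_right_zero]
  simp [omul, oconj, e, Fin.sum_univ_eight]
  try ring
@[local simp] lemma P_3_0 (a : O) : P a 3 0 = a 3 := by
  simp only [P, otr, Matrix.of_apply]
  rw [omul_e_right_zero]
  simp [omul, oconj, e, Fin.sum_univ_eight]
  try ring
@[local simp] lemma P_3_1 (a : O) : P a 3 1 = a 7 := by
  simp only [P, otr, Matrix.of_apply]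
  rw [omul_e_right_zero]
  simp [omul, oconj, e, Fin.sum_univ_eight]
  try ring
@[local simp] lemma P_3_2 (a : O) : P a 3 2 = a 5 := by
  simp only [P, otr, Matrix.of_apply]
  rw [omul_e_right_zero]
  simp [omul, oconj, e, Fin.sum_univ_eight]
  try ring
@[local simp] lemma P_3_3 (a : O) : P a 3 3 = a 0 := by
  simp only [P, otr, Matrix.of_apply]
  rw [omul_e_right_zero]
  simp [omul, oconj, e, Fin.sum_univ_eight]
  try ring
@[local simp] lemma P_3_4 (a : O) : P a 3 4 = -a 6 := by
  simp only [P, otr, Matrix.of_apply]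
  rw [omul_e_right_zero]
  simp [omul, oconj, e, Fin.sum_univ_eight]
  try ring
@[local simp] lemma P_3_5 (a : O) : P a 3 5 = -a 2 := by
  simp only [P, otr, Matrix.of_apply]
  rw [omul_e_right_zero]
  simp [omul, oconj, e, Fin.sum_univ_eight]
  try ring
@[local simp] lemma P_3_6 (a : O) : P a 3 6 = a 4 := by
  simp only [P, otr, Matrix.of_apply]
  rw [omul_e_right_zero]
  simp [omul, oconj, e, Fin.sum_univ_eight]
  try ring
@[local simp] lemma P_3_7 (a : O) : P a 3 7 = -a 1 := by
  simp only [P, otr, Matrix.of_apply]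
  rw [omul_e_right_zero]
  simp [omul, oconj, e, Fin.sum_univ_eight]
  try ring
@[local simp] lemma P_4_0 (a : O) : P a 4 0 = a 4 := by
  simp only [P, otr, Matrix.of_apply]
  rw [omul_e_right_zero]
  simp [omul, oconj, e, Fin.sum_univ_eight]
  try ring
@[local simp] lemma P_4_1 (a : O) : P a 4 1 = -a 2 := by
  simp only [P, otr, Matrix.of_apply]
  rw [omul_e_right_zero]
  simp [omul, oconj, e, Fin.sum_univ_eight]
  try ring
@[local simp] lemma P_4_2 (a : O) : P a 4 2 = a 1 := by
  simp only [P, otr, Matrix.of_apply]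
  rw [omul_e_right_zero]
  simp [omul, oconj, e, Fin.sum_univ_eight]
  try ring
@[local simp] lemma P_4_3 (a : O) : P a 4 3 = a 6 := by
  simp only [P, otr, Matrix.of_apply]
  rw [omul_e_right_zero]
  simp [omul, oconj, e, Fin.sum_univ_eight]
  try ring
@[local simp] lemma P_4_4 (a : O) : P a 4 4 = a 0 := by
  simp only [P, otr, Matrix.of_apply]
  rw [omul_e_right_zero]
  simp [omul, oconj, e, Fin.sum_univ_eight]
  try ring
@[local simp] lemma P_4_5 (a : O) : P a 4 5 = -a 7 := by
  simp only [P, otr, Matrix.of_apply]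
  rw [omul_e_right_zero]
  simp [omul, oconj, e, Fin.sum_univ_eight]
  try ring
@[local simp] lemma P_4_6 (a : O) : P a 4 6 = -a 3 := by
  simp only [P, otr, Matrix.of_apply]
  rw [omul_e_right_zero]
  simp [omul, oconj, e, Fin.sum_univ_eight]
  try ring
@[local simp] lemma P_4_7 (a : O) : P a 4 7 = a 5 := by
  simp only [P, otr, Matrix.of_apply]
  rw [omul_e_right_zero]
  simp [omul, oconj, e, Fin.sum_univ_eight]
  try ring
@[local simp] lemma P_5_0 (a : O) : P a 5 0 = a 5 := by
  simp only [P, otr, Matrix.of_apply]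
  rw [omul_e_right_zero]
  simp [omul, oconj, e, Fin.sum_univ_eight]
  try ring
@[local simp] lemma P_5_1 (a : O) : P a 5 1 = a 6 := by
  simp only [P, otr, Matrix.of_apply]
  rw [omul_e_right_zero]
  simp [omul, oconj, e, Fin.sum_univ_eight]
  try ring
@[local simp] lemma P_5_2 (a : O) : P a 5 2 = -a 3 := by
  simp only [P, otr, Matrix.of_apply]
  rw [omul_e_right_zero]
  simp [omul, oconj, e, Fin.sum_univ_eight]
  try ring
@[local simp] lemma P_5_3 (a : O) : P a 5 3 = a 2 := by
  simp only [P, otr, Matrix.of_apply]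
  rw [omul_e_right_zero]
  simp [omul, oconj, e, Fin.sum_univ_eight]
  try ring
@[local simp] lemma P_5_4 (a : O) : P a 5 4 = a 7 := by
  simp only [P, otr, Matrix.of_apply]
  rw [omul_e_right_zero]
  simp [omul, oconj, e, Fin.sum_univ_eight]
  try ring
@[local simp] lemma P_5_5 (a : O) : P a 5 5 = a 0 := by
  simp only [P, otr, Matrix.of_apply]
  rw [omul_e_right_zero]
  simp [omul, oconj, e, Fin.sum_univ_eight]
  try ring
@[local simp] lemma P_5_6 (a : O) : P a 5 6 = -a 1 := by
  simp only [P, otr, Matrix.of_apply]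
  rw [omul_e_right_zero]
  simp [omul, oconj, e, Fin.sum_univ_eight]
  try ring
@[local simp] lemma P_5_7 (a : O) : P a 5 7 = -a 4 := by
  simp only [P, otr, Matrix.of_apply]
  rw [omul_e_right_zero]
  simp [omul, oconj, e, Fin.sum_univ_eight]
  try ring
@[local simp] lemma P_6_0 (a : O) : P a 6 0 = a 6 := by
  simp only [P, otr, Matrix.of_apply]
  rw [omul_e_right_zero]
  simp [omul, oconj, e, Fin.sum_univ_eight]
  try ring
@[local simp] lemma P_6_1 (a : O) : P a 6 1 = -a 5 := by
  simp only [P, otr, Matrix.of_apply]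
  rw [omul_e_right_zero]
  simp [omul, oconj, e, Fin.sum_univ_eight]
  try ring
@[local simp] lemma P_6_2 (a : O) : P a 6 2 = a 7 := by
  simp only [P, otr, Matrix.of_apply]
  rw [omul_e_right_zero]
  simp [omul, oconj, e, Fin.sum_univ_eight]
  try ring
@[local simp] lemma P_6_3 (a : O) : P a 6 3 = -a 4 := by
  simp only [P, otr, Matrix.of_apply]
  rw [omul_e_right_zero]
  simp [omul, oconj, e, Fin.sum_univ_eight]
  try ring
@[local simp] lemma P_6_4 (a : O) : P a 6 4 = a 3 := by
  simp only [P, otr, Matrix.of_apply]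
  rw [omul_e_right_zero]
  simp [omul, oconj, e, Fin.sum_univ_eight]
  try ring
@[local simp] lemma P_6_5 (a : O) : P a 6 5 = a 1 := by
  simp only [P, otr, Matrix.of_apply]
  rw [omul_e_right_zero]
  simp [omul, oconj, e, Fin.sum_univ_eight]
  try ring
@[local simp] lemma P_6_6 (a : O) : P a 6 6 = a 0 := by
  simp only [P, otr, Matrix.of_apply]
  rw [omul_e_right_zero]
  simp [omul, oconj, e, Fin.sum_univ_eight]
  try ring
@[local simp] lemma P_6_7 (a : O) : P a 6 7 = -a 2 := by
  simp only [P, otr, Matrix.of_apply]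
  rw [omul_e_right_zero]
  simp [omul, oconj, e, Fin.sum_univ_eight]
  try ring
@[local simp] lemma P_7_0 (a : O) : P a 7 0 = a 7 := by
  simp only [P, otr, Matrix.of_apply]
  rw [omul_e_right_zero]
  simp [omul, oconj, e, Fin.sum_univ_eight]
  try ring
@[local simp] lemma P_7_1 (a : O) : P a 7 1 = -a 3 := by
  simp only [P, otr, Matrix.of_apply]
  rw [omul_e_right_zero]
  simp [omul, oconj, e, Fin.sum_univ_eight]
  try ring
@[local simp] lemma P_7_2 (a : O) : P a 7 2 = -a 6 := by
  simp only [P, otr, Matrix.of_apply]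
  rw [omul_e_right_zero]
  simp [omul, oconj, e, Fin.sum_univ_eight]
  try ring
@[local simp] lemma P_7_3 (a : O) : P a 7 3 = a 1 := by
  simp only [P, otr, Matrix.of_apply]
  rw [omul_e_right_zero]
  simp [omul, oconj, e, Fin.sum_univ_eight]
  try ring
@[local simp] lemma P_7_4 (a : O) : P a 7 4 = -a 5 := by
  simp only [P, otr, Matrix.of_apply]
  rw [omul_e_right_zero]
  simp [omul, oconj, e, Fin.sum_univ_eight]
  try ring
@[local simp] lemma P_7_5 (a : O) : P a 7 5 = a 4 := by
  simp only [P, otr, Matrix.of_apply]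
  rw [omul_e_right_zero]
  simp [omul, oconj, e, Fin.sum_univ_eight]
  try ring
@[local simp] lemma P_7_6 (a : O) : P a 7 6 = a 2 := by
  simp only [P, otr, Matrix.of_apply]
  rw [omul_e_right_zero]
  simp [omul, oconj, e, Fin.sum_univ_eight]
  try ring
@[local simp] lemma P_7_7 (a : O) : P a 7 7 = a 0 := by
  simp only [P, otr, Matrix.of_apply]
  rw [omul_e_right_zero]
  simp [omul, oconj, e, Fin.sum_univ_eight]
  try ring

end

set_option maxHeartbeats 1000000 in
theorem P_linear_and_clifford :
    (∀ (a b : O) (s t : ℝ), P (s • a + t • b) = s • P a + t • P b) ∧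
    (∀ a : O, P a * (P a)ᵀ = oN a • (1 : Matrix (Fin 8) (Fin 8) ℝ)) := by
  constructor
  · intro a b s t
    ext i k
    fin_cases i <;> fin_cases k <;>
      simp [P_0_0, P_0_1, P_0_2, P_0_3, P_0_4, P_0_5, P_0_6, P_0_7, P_1_0, P_1_1, P_1_2, P_1_3, P_1_4, P_1_5, P_1_6, P_1_7, P_2_0, P_2_1, P_2_2, P_2_3, P_2_4, P_2_5, P_2_6, P_2_7, P_3_0, P_3_1, P_3_2, P_3_3, P_3_4, P_3_5, P_3_6, P_3_7, P_4_0, P_4_1, P_4_2, P_4_3, P_4_4, P_4_5, P_4_6, P_4_7, P_5_0, P_5_1, P_5_2, P_5_3, P_5_4, P_5_5, P_5_6, P_5_7, P_6_0, P_6_1, P_6_2, P_6_3, P_6_4, P_6_5, P_6_6, P_6_7, P_7_0, P_7_1, P_7_2, P_7_3, P_7_4, P_7_5, P_7_6, P_7_7, Matrix.add_apply, Matrix.smul_apply, Pi.add_apply, Pi.smul_apply,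
        smul_eq_mul] <;> ring
  · intro a
    ext i k
    rw [Matrix.mul_apply]
    fin_cases i <;> fin_cases k <;>
      simp [P_0_0, P_0_1, P_0_2, P_0_3, P_0_4, P_0_5, P_0_6, P_0_7, P_1_0, P_1_1, P_1_2, P_1_3, P_1_4, P_1_5, P_1_6, P_1_7, P_2_0, P_2_1, P_2_2, P_2_3, P_2_4, P_2_5, P_2_6, P_2_7, P_3_0, P_3_1, P_3_2, P_3_3, P_3_4, P_3_5, P_3_6, P_3_7, P_4_0, P_4_1, P_4_2, P_4_3, P_4_4, P_4_5, P_4_6, P_4_7, P_5_0, P_5_1, P_5_2, P_5_3, P_5_4, P_5_5, P_5_6, P_5_7, P_6_0, P_6_1, P_6_2, P_6_3, P_6_4, P_6_5, P_6_6, P_6_7, P_7_0, P_7_1, P_7_2, P_7_3, P_7_4, P_7_5, P_7_6, P_7_7, oN, Fin.sum_univ_eight, Matrix.one_apply, Matrix.transpose_apply,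
        Matrix.smul_apply, smul_eq_mul] <;> ring

end
end
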